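/- Let U be a tied incomplete ranking on {1,…,n} with consistent set S_U and ranked item set B_U with |B_U| = k. Let i ∉ B_U be unranked and let j ∈ B_U be ranked. Then the fraction of consistent permutations ranking i before j is #{π ∈ S_U : π(i) < π(j)} / |S_U| = (τ_U(j) + (φ_U(j) − 1)/2) / (k + 1). -/

import Mathlib

/-- A tied incomplete ranking on `{1,…,n}`: a sequence `A 0, …, A (K-1)` of nonempty
pairwise disjoint subsets of `Fin n`; all items in `A s` are preferred to all items
in `A t` for `s < t`. -/
structure TIR (n : ℕ) where
  K : ℕ
  A : Fin K → Finset (Fin n)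
  nonempty : ∀ s, (A s).Nonempty
  disjoint : ∀ s t, s ≠ t → Disjoint (A s) (A t)

/-- The set of permutations consistent with a tied incomplete ranking `U`. -/
def TIR.consistent {n : ℕ} (U : TIR n) : Finset (Equiv.Perm (Fin n)) :=
  Finset.univ.filter (fun π => ∀ s t : Fin U.K, s < t →
    ∀ a ∈ U.A s, ∀ b ∈ U.A t, π a < π b)

/-- The set `B_U` of items ranked by `U`. -/
def TIR.ranked {n : ℕ} (U : TIR n) : Finset (Fin n) :=
  Finset.univ.biUnion U.A

/-! Let `ρ π` be the number of ranked items that `π` places before the unranked item `i`.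
Exchanging the positions of `i` and of the nearest ranked item after it preserves consistency
and raises `ρ` by one, so `ρ` is uniformly distributed on `{0, …, k}` over `S_U`. For consistent
`π` the ranked items before `i` fill the blocks in order, so exactly `min φ (ρ π - (τ - 1))`
items of the block of `j` precede `i`. Transposing two items of that block preserves `S_U` and
fixes `i`, so each of them follows `i` equally often, and averaging over `ρ` gives the
formula. -/

open Finset Equiv

section AdjacentOn

variable {α : Type*} [LinearOrder α]

def Equiv.Perm.AdjacentOn (π : Perm α) (B : Finset α) (i c : α) : Prop :=
  ∀ x ∈ B, ¬ (π i < π x ∧ π x < π c) ∧ ¬ (π c < π x ∧ π x < π i)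

namespace Equiv.Perm.AdjacentOn

variable {π : Perm α} {B : Finset α} {i c : α}

lemma mul_swap (hi : i ∉ B) (h : π.AdjacentOn B i c) : (π * swap i c).AdjacentOn B i c := by
  intro x hx
  have hxi : x ≠ i := ne_of_mem_of_not_mem hx hi
  rcases eq_or_ne x c with rfl | hxc
  · simp
  · simp only [Perm.mul_apply, swap_apply_left, swap_apply_right, swap_apply_of_ne_of_ne hxi hxc]
    exact (h x hx).symm

lemma lt_iff_lt_of_ne (hi : i ∉ B) (h : π.AdjacentOn B i c) {x : α} (hx : x ∈ B)
    (hxc : x ≠ c) :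
    (π i < π x ↔ π c < π x) ∧ (π x < π i ↔ π x < π c) := by
  have hxi : π x ≠ π i := π.injective.ne (ne_of_mem_of_not_mem hx hi)
  have hxc : π x ≠ π c := π.injective.ne hxc
  obtain ⟨h₁, h₂⟩ := h x hx
  rcases not_and_or.mp h₁ with h₁ | h₁ <;> rcases not_and_or.mp h₂ with h₂ | h₂ <;>
    constructor <;> constructor <;> intro <;> order

lemma mul_swap_lt_mul_swap_iff (hi : i ∉ B) (h : π.AdjacentOn B i c) {a b : α} (ha : a ∈ B)
    (hb : b ∈ B) :
    (π * swap i c) a < (π * swap i c) b ↔ π a < π b := by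
  have hai : a ≠ i := ne_of_mem_of_not_mem ha hi
  have hbi : b ≠ i := ne_of_mem_of_not_mem hb hi
  simp only [Perm.mul_apply]
  rcases eq_or_ne a b with rfl | hab
  · simp
  rcases eq_or_ne a c with rfl | hac
  · rw [swap_apply_right, swap_apply_of_ne_of_ne hbi hab.symm]
    exact (h.lt_iff_lt_of_ne hi hb hab.symm).1
  rcases eq_or_ne b c with rfl | hbc
  · rw [swap_apply_right, swap_apply_of_ne_of_ne hai hac]
    exact (h.lt_iff_lt_of_ne hi ha hac).2
  · rw [swap_apply_of_ne_of_ne hai hac, swap_apply_of_ne_of_ne hbi hbc]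

lemma card_filter_lt_mul_swap (hi : i ∉ B) (hc : c ∈ B) (h : π.AdjacentOn B i c)
    (hic : π i < π c) :
    #{x ∈ B | (π * swap i c) x < (π * swap i c) i} = #{x ∈ B | π x < π i} + 1 := by
  have hcgt : c ∉ {x ∈ B | π x < π i} := by simp [hic.le]
  rw [← card_insert_of_notMem hcgt]
  congr 1
  ext x
  simp only [mem_filter, mem_insert, Perm.mul_apply, swap_apply_left]
  rcases eq_or_ne x c with rfl | hxc
  · simpa using ⟨hc, hic⟩
  by_cases hx : x ∈ B
  · rw [swap_apply_of_ne_of_ne (ne_of_mem_of_not_mem hx hi) hxc]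
    simp [hx, hxc, (h.lt_iff_lt_of_ne hi hx hxc).2]
  · simp [hx, hxc]

lemma unique (hi : i ∉ B) (hc : c ∈ B) {c' : α} (hc' : c' ∈ B) (h : π.AdjacentOn B i c)
    (h' : π.AdjacentOn B i c') (hside : π i < π c ↔ π i < π c') : c = c' := by
  by_contra hne
  have hc'i : π c' ≠ π i := π.injective.ne (ne_of_mem_of_not_mem hc' hi)
  have hci : π c ≠ π i := π.injective.ne (ne_of_mem_of_not_mem hc hi)
  rcases lt_or_gt_of_ne (π.injective.ne hne) with hlt | hlt
  · by_cases hic : π i < π c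
    · exact (h' c hc).1 ⟨hic, hlt⟩
    · exact (h c' hc').2 ⟨hlt, lt_of_le_of_ne (not_lt.1 (mt hside.2 hic)) hc'i⟩
  · by_cases hic : π i < π c
    · exact (h c' hc').1 ⟨hside.1 hic, hlt⟩
    · exact (h' c hc).2 ⟨hlt, lt_of_le_of_ne (not_lt.1 hic) hci⟩

end Equiv.Perm.AdjacentOn

lemma Equiv.Perm.exists_adjacentOn_gt {π : Perm α} {B : Finset α} {i : α}
    (h : ∃ x ∈ B, π i < π x) : ∃ c ∈ B, π i < π c ∧ π.AdjacentOn B i c := by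
  obtain ⟨c, hc, hmin⟩ := exists_min_image {x ∈ B | π i < π x} π (filter_nonempty_iff.2 h)
  rw [mem_filter] at hc
  refine ⟨c, hc.1, hc.2, fun x hx => ⟨fun hx' => ?_, fun hx' => ?_⟩⟩
  · exact (hmin x (mem_filter.2 ⟨hx, hx'.1⟩)).not_gt hx'.2
  · exact lt_asymm hc.2 (hx'.1.trans hx'.2)

lemma Equiv.Perm.exists_adjacentOn_lt {π : Perm α} {B : Finset α} {i : α}
    (h : ∃ x ∈ B, π x < π i) : ∃ c ∈ B, π c < π i ∧ π.AdjacentOn B i c := by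
  obtain ⟨c, hc, hmax⟩ := exists_max_image {x ∈ B | π x < π i} π (filter_nonempty_iff.2 h)
  rw [mem_filter] at hc
  refine ⟨c, hc.1, hc.2, fun x hx => ⟨fun hx' => ?_, fun hx' => ?_⟩⟩
  · exact lt_asymm hc.2 (hx'.1.trans hx'.2)
  · exact (hmax x (mem_filter.2 ⟨hx, hx'.2⟩)).not_gt hx'.1

lemma Equiv.Perm.card_filter_card_filter_lt_eq_succ {S : Finset (Perm α)} {B : Finset α} {i : α}
    (hS : ∀ π σ : Perm α, (∀ a ∈ B, ∀ b ∈ B, σ a < σ b ↔ π a < π b) → π ∈ S → σ ∈ S)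
    (hi : i ∉ B) {a : ℕ} (ha : a < #B) :
    #{π ∈ S | #{x ∈ B | π x < π i} = a}
      = #{π ∈ S | #{x ∈ B | π x < π i} = a + 1} := by
  have hup : ∀ π ∈ {π ∈ S | #{x ∈ B | π x < π i} = a},
      ∃ c ∈ B, π i < π c ∧ π.AdjacentOn B i c := by
    intro π hπ
    rw [mem_filter] at hπ
    refine Perm.exists_adjacentOn_gt ?_
    by_contra! hle
    have hall : {x ∈ B | π x < π i} = B := filter_true_of_mem fun x hx =>
      (hle x hx).lt_of_ne (π.injective.ne (ne_of_mem_of_not_mem hx hi))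
    rw [hall] at hπ
    omega
  choose c hcB hlt hadj using hup
  -- `i` trades places with the next ranked item; the inverse trades it with the previous one
  refine card_bij (fun π hπ => π * swap i (c π hπ)) (fun π hπ => ?_)
    (fun π₁ h₁ π₂ h₂ heq => ?_) (fun σ hσ => ?_)
  · have hπ' := mem_filter.1 hπ
    refine mem_filter.2
      ⟨hS _ _ (fun x hx y hy => (hadj π hπ).mul_swap_lt_mul_swap_iff hi hx hy) hπ'.1, ?_⟩
    rw [(hadj π hπ).card_filter_lt_mul_swap hi (hcB π hπ) (hlt π hπ), hπ'.2]
  · have hc : c π₁ h₁ = c π₂ h₂ := by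
      refine ((hadj π₁ h₁).mul_swap hi).unique hi (hcB π₁ h₁) (hcB π₂ h₂)
        (heq ▸ (hadj π₂ h₂).mul_swap hi) ?_
      exact iff_of_false (by simpa using (hlt π₁ h₁).not_gt)
        (by rw [heq]; simpa using (hlt π₂ h₂).not_gt)
    simpa [hc] using heq
  · have hσ' := mem_filter.1 hσ
    obtain ⟨d, hdB, hdi, hdadj⟩ : ∃ d ∈ B, σ d < σ i ∧ σ.AdjacentOn B i d :=
      Perm.exists_adjacentOn_lt (filter_nonempty_iff.1 (card_pos.1 (by omega)))
    set π := σ * swap i d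
    have hπσ : π * swap i d = σ := mul_swap_mul_self i d σ
    have hπadj : π.AdjacentOn B i d := hdadj.mul_swap hi
    have hπi : π i < π d := by simpa [π] using hdi
    have hπ : π ∈ {π ∈ S | #{x ∈ B | π x < π i} = a} := by
      refine mem_filter.2
        ⟨hS _ _ (fun x hx y hy => hdadj.mul_swap_lt_mul_swap_iff hi hx hy) hσ'.1, ?_⟩
      have := hπadj.card_filter_lt_mul_swap hi hdB hπi
      rw [hπσ, hσ'.2] at this
      omega
    refine ⟨π, hπ, ?_⟩
    rw [(hadj π hπ).unique hi (hcB π hπ) hdB hπadj (iff_of_true (hlt π hπ) hπi), hπσ]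

end AdjacentOn

lemma sum_range_min_sub (τ φ R : ℕ) :
    ∑ a ∈ range (τ + φ + R), min φ (a - τ) = ∑ d ∈ range φ, d + R * φ := by
  rw [sum_range_add, sum_range_add,
    sum_eq_zero fun a ha => by simp [Nat.sub_eq_zero_of_le (mem_range.1 ha).le], zero_add,
    sum_congr rfl fun d hd => (by simp [(mem_range.1 hd).le] : min φ (τ + d - τ) = d),
    sum_congr rfl fun r _ => (by omega : min φ (τ + φ + r - τ) = φ), sum_const, card_range,
    smul_eq_mul]

lemma eq_min_sum_sub_of_saturated {ι : Type*} [Fintype ι] [LinearOrder ι] {c m : ι → ℕ}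
    (hcm : ∀ t, c t ≤ m t) (hsat : ∀ t t', t < t' → 0 < c t' → c t = m t) {s : ι}
    (hs : 0 < m s) :
    c s = min (m s) (∑ t, c t - ∑ t ∈ univ.filter (· < s), m t) := by
  set R := (univ.filter (fun t => ¬ t < s)).erase s
  have hsum : ∑ t, c t = ∑ t ∈ univ.filter (· < s), c t + (c s + ∑ t ∈ R, c t) := by
    rw [← sum_filter_add_sum_filter_not univ (· < s), add_sum_erase _ _ (by simp)]
  have hle : ∑ t ∈ univ.filter (· < s), c t ≤ ∑ t ∈ univ.filter (· < s), m t :=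
    sum_le_sum fun t _ => hcm t
  have hfull :
      0 < c s → ∑ t ∈ univ.filter (· < s), c t = ∑ t ∈ univ.filter (· < s), m t :=
    fun hpos => sum_congr rfl fun t ht => hsat t s (by simpa using ht) hpos
  rcases (hcm s).lt_or_eq with hlt | heq
  · have hR0 : ∑ t ∈ R, c t = 0 := sum_eq_zero fun t ht => by
      have hst : s < t := by
        simp only [R, mem_erase, mem_filter, mem_univ, true_and, not_lt] at ht
        exact lt_of_le_of_ne ht.2 (Ne.symm ht.1)
      by_contra hne
      exact hlt.ne (hsat s t hst (Nat.pos_of_ne_zero hne))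
    rcases Nat.eq_zero_or_pos (c s) with h0 | hpos
    · omega
    · have := hfull hpos
      omega
  · have := hfull (heq ▸ hs)
    omega

namespace TIR

variable {n : ℕ} (U : TIR n)

lemma mem_consistent {π : Perm (Fin n)} : π ∈ U.consistent ↔
    ∀ s t : Fin U.K, s < t → ∀ a ∈ U.A s, ∀ b ∈ U.A t, π a < π b := by
  simp [TIR.consistent]

lemma mem_ranked {x : Fin n} : x ∈ U.ranked ↔ ∃ t, x ∈ U.A t := by
  simp [TIR.ranked]

lemma eq_of_mem_A {x : Fin n} {s t : Fin U.K} (hs : x ∈ U.A s) (ht : x ∈ U.A t) : s = t := by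
  by_contra h
  exact disjoint_left.1 (U.disjoint s t h) hs ht

lemma card_ranked : #U.ranked = ∑ t, #(U.A t) :=
  card_biUnion fun s _ t _ h => U.disjoint s t h

lemma sum_card_A_lt_add_card_A_le (s : Fin U.K) :
    ∑ t ∈ univ.filter (· < s), #(U.A t) + #(U.A s) ≤ #U.ranked := by
  rw [card_ranked, add_comm, ← sum_insert (f := fun t => #(U.A t)) (by simp)]
  exact sum_le_sum_of_subset (subset_univ _)

lemma consistent_nonempty : U.consistent.Nonempty := by
  classical
  let w : Fin n → ℕ := fun x => if h : ∃ t, x ∈ U.A t then h.choose else U.K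
  have hw : ∀ t, ∀ x ∈ U.A t, w x = t := fun t x hx => by
    have h : ∃ t, x ∈ U.A t := ⟨t, hx⟩
    simp only [w, dif_pos h, U.eq_of_mem_A h.choose_spec hx]
  -- `(Tuple.sort w)⁻¹` places the items in increasing order of their block index `w`
  refine ⟨(Tuple.sort w)⁻¹, U.mem_consistent.2 fun s t hst a ha b hb => ?_⟩
  by_contra hle
  have := Tuple.monotone_sort w (not_lt.1 hle)
  simp only [Function.comp_apply, Perm.inv_def, apply_symm_apply, hw s a ha, hw t b hb] at this
  exact this.not_gt hst

lemma mem_consistent_of_lt_iff {π σ : Perm (Fin n)}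
    (h : ∀ a ∈ U.ranked, ∀ b ∈ U.ranked, σ a < σ b ↔ π a < π b) (hπ : π ∈ U.consistent) :
    σ ∈ U.consistent :=
  U.mem_consistent.2 fun s t hst a ha b hb =>
    (h a (U.mem_ranked.2 ⟨s, ha⟩) b (U.mem_ranked.2 ⟨t, hb⟩)).2
      (U.mem_consistent.1 hπ s t hst a ha b hb)

lemma mul_mem_consistent {π σ : Perm (Fin n)} (hσ : ∀ t, ∀ x ∈ U.A t, σ x ∈ U.A t)
    (hπ : π ∈ U.consistent) : π * σ ∈ U.consistent :=
  U.mem_consistent.2 fun s t hst a ha b hb =>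
    U.mem_consistent.1 hπ s t hst _ (hσ s a ha) _ (hσ t b hb)

variable {U} {i : Fin n}

lemma card_fiber_eq_card_fiber_zero (hi : i ∉ U.ranked) {a : ℕ} (ha : a ≤ #U.ranked) :
    #{π ∈ U.consistent | #{x ∈ U.ranked | π x < π i} = a}
      = #{π ∈ U.consistent | #{x ∈ U.ranked | π x < π i} = 0} := by
  induction a with
  | zero => rfl
  | succ a ih =>
    rw [← Perm.card_filter_card_filter_lt_eq_succ
      (fun π σ h hπ => U.mem_consistent_of_lt_iff h hπ) hi ha, ih (by omega)]

lemma sum_consistent_comp_card_filter_lt (hi : i ∉ U.ranked) (f : ℕ → ℕ) :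
    ∑ π ∈ U.consistent, f #{x ∈ U.ranked | π x < π i}
      = #{π ∈ U.consistent | #{x ∈ U.ranked | π x < π i} = 0}
        * ∑ a ∈ range (#U.ranked + 1), f a := by
  rw [← sum_fiberwise_of_maps_to (g := fun π => #{x ∈ U.ranked | π x < π i})
    (t := range (#U.ranked + 1)) fun π _ => mem_range.2 (Nat.lt_succ_of_le (card_filter_le _ _)),
    mul_sum]
  refine sum_congr rfl fun a ha => ?_
  rw [sum_congr rfl fun π hπ => congrArg f (mem_filter.1 hπ).2, sum_const, smul_eq_mul,
    card_fiber_eq_card_fiber_zero hi (Nat.lt_succ_iff.1 (mem_range.1 ha)), mul_comm]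

lemma card_filter_lt_eq_of_mem_A (hi : i ∉ U.ranked) {s : Fin U.K} {j b : Fin n}
    (hj : j ∈ U.A s) (hb : b ∈ U.A s) :
    #{π ∈ U.consistent | π i < π j} = #{π ∈ U.consistent | π i < π b} := by
  have hσ : ∀ t, ∀ x ∈ U.A t, swap j b x ∈ U.A t := fun t x hx => by
    rcases eq_or_ne x j with rfl | hxj
    · rwa [swap_apply_left, ← U.eq_of_mem_A hj hx]
    rcases eq_or_ne x b with rfl | hxb
    · rwa [swap_apply_right, ← U.eq_of_mem_A hb hx]
    · rwa [swap_apply_of_ne_of_ne hxj hxb]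
  have hij : swap j b i = i := swap_apply_of_ne_of_ne
    (fun h => hi (U.mem_ranked.2 ⟨s, h ▸ hj⟩)) (fun h => hi (U.mem_ranked.2 ⟨s, h ▸ hb⟩))
  refine card_equiv (Equiv.mulRight (swap j b)) fun π => ?_
  simp only [mem_filter, coe_mulRight, Perm.mul_apply, hij, swap_apply_right]
  refine and_congr_left' ⟨U.mul_mem_consistent hσ, fun h => ?_⟩
  simpa using U.mul_mem_consistent hσ h

lemma card_A_mul_card_filter_lt_add_sum (hi : i ∉ U.ranked) {s : Fin U.K} {j : Fin n}
    (hj : j ∈ U.A s) :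
    #(U.A s) * #{π ∈ U.consistent | π i < π j}
      + ∑ π ∈ U.consistent, #{x ∈ U.A s | π x < π i} = #(U.A s) * #U.consistent := by
  have hsplit (π : Perm (Fin n)) :
      #{b ∈ U.A s | π i < π b} + #{x ∈ U.A s | π x < π i} = #(U.A s) := by
    rw [← card_filter_add_card_filter_not (s := U.A s) (fun b => π i < π b)]
    congr 2
    refine filter_congr fun b hb => ?_
    have hbi : π b ≠ π i := π.injective.ne fun h => hi (U.mem_ranked.2 ⟨s, h ▸ hb⟩)
    exact ⟨fun h => not_lt.2 h.le, fun h => lt_of_le_of_ne (not_lt.1 h) hbi⟩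
  have hdouble : #(U.A s) * #{π ∈ U.consistent | π i < π j}
      = ∑ π ∈ U.consistent, #{b ∈ U.A s | π i < π b} := by
    rw [← smul_eq_mul, ← sum_const,
      sum_congr rfl fun b hb => card_filter_lt_eq_of_mem_A hi hj hb]
    exact sum_card_bipartiteAbove_eq_sum_card_bipartiteBelow
      (fun (b : Fin n) (π : Perm (Fin n)) => π i < π b)
  rw [hdouble, ← sum_add_distrib, sum_congr rfl fun π _ => hsplit π, sum_const, smul_eq_mul,
    mul_comm]

lemma card_filter_A_lt_eq_min {π : Perm (Fin n)} (hπ : π ∈ U.consistent) (s : Fin U.K) :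
    #{x ∈ U.A s | π x < π i}
      = min #(U.A s)
          (#{x ∈ U.ranked | π x < π i} - ∑ t ∈ univ.filter (· < s), #(U.A t)) := by
  have hsum : #{x ∈ U.ranked | π x < π i} = ∑ t, #{x ∈ U.A t | π x < π i} := by
    rw [TIR.ranked, filter_biUnion]
    exact card_biUnion fun t _ t' _ h => disjoint_filter_filter (U.disjoint t t' h)
  rw [hsum]
  refine eq_min_sum_sub_of_saturated (fun t => card_filter_le _ _) (fun t t' htt' hpos => ?_)
    (card_pos.2 (U.nonempty s))
  obtain ⟨y, hy⟩ := card_pos.1 hpos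
  rw [mem_filter] at hy
  rw [filter_true_of_mem fun x hx => (U.mem_consistent.1 hπ t t' htt' x hx y hy.1).trans hy.2]

theorem two_mul_card_ranked_add_one_mul_card_filter_lt (hi : i ∉ U.ranked) {s : Fin U.K}
    {j : Fin n} (hj : j ∈ U.A s) :
    2 * (#U.ranked + 1) * #{π ∈ U.consistent | π i < π j}
      = (2 * ∑ t ∈ univ.filter (· < s), #(U.A t) + #(U.A s) + 1) * #U.consistent := by
  set τ := ∑ t ∈ univ.filter (· < s), #(U.A t)
  set φ := #(U.A s)
  set c₀ := #{π ∈ U.consistent | #{x ∈ U.ranked | π x < π i} = 0}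
  obtain ⟨R, hR⟩ : ∃ R, #U.ranked + 1 = τ + φ + R :=
    ⟨#U.ranked + 1 - (τ + φ), by have := U.sum_card_A_lt_add_card_A_le s; omega⟩
  have hN : #U.consistent = c₀ * (#U.ranked + 1) := by
    simpa only [sum_const, smul_eq_mul, mul_one, card_range] using
      sum_consistent_comp_card_filter_lt hi (fun _ => 1)
  have hbelow : ∑ π ∈ U.consistent, #{x ∈ U.A s | π x < π i}
      = c₀ * (∑ d ∈ range φ, d + R * φ) := by
    rw [sum_congr rfl fun π hπ => card_filter_A_lt_eq_min hπ s,
      sum_consistent_comp_card_filter_lt hi (fun a => min φ (a - τ)), hR, sum_range_min_sub]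
  have hsplit := card_A_mul_card_filter_lt_add_sum hi hj
  have hgauss : (∑ d ∈ range φ, d) * 2 + φ = φ * φ := by
    rw [sum_range_id_mul_two]
    cases φ <;> simp [Nat.mul_succ]
  refine Nat.eq_of_mul_eq_mul_left (card_pos.2 (U.nonempty s)) ?_
  linear_combination (2 * (#U.ranked + 1)) * hsplit - (2 * (#U.ranked + 1)) * hbelow
    + 2 * (∑ d ∈ range φ, d + R * φ) * hN - #U.consistent * hgauss
    + 2 * #U.consistent * φ * hR

end TIR

/-- If `i` is unranked and `j ∈ A s` is ranked, with `k = |B_U|`,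
`τ = τ_U(j) = 1 + Σ_{t<s}|A t|` and `φ = φ_U(j) = |A s|`, then the fraction of
consistent permutations ranking `i` before `j` is `(τ + (φ−1)/2)/(k+1)`. -/
theorem unranked_before_ranked_fraction (n : ℕ) (U : TIR n) (i j : Fin n)
    (hi : i ∉ U.ranked) (s : Fin U.K) (hj : j ∈ U.A s)
    (τ φ : ℕ)
    (hτ : τ = 1 + ∑ t ∈ Finset.univ.filter (fun t : Fin U.K => t < s), (U.A t).card)
    (hφ : φ = (U.A s).card) :
    ((U.consistent.filter (fun π => π i < π j)).card : ℚ) / (U.consistent.card : ℚ)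
      = ((τ : ℚ) + ((φ : ℚ) - 1) / 2) / ((U.ranked.card : ℚ) + 1) := by
  have hN : (#U.consistent : ℚ) ≠ 0 := Nat.cast_ne_zero.2 U.consistent_nonempty.card_pos.ne'
  have key : (2 * (#U.ranked + 1) * #{π ∈ U.consistent | π i < π j} : ℚ)
      = (2 * ∑ t ∈ univ.filter (· < s), #(U.A t) + #(U.A s) + 1) * #U.consistent := by
    exact_mod_cast TIR.two_mul_card_ranked_add_one_mul_card_filter_lt hi hj
  rw [div_eq_div_iff hN (by positivity), hτ, hφ]
  push_cast at key ⊢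
  linear_combination key / 2
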